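/- arXiv:1210.6485 — 5 statements merged into one kernel-verified Lean document; each statement's English description precedes it below -/
import Mathlib

section
/- Let K be a field equipped with a nonarchimedean absolute value |·| : K → ℝ. Assume K is spherically complete, i.e., every descending sequence of balls B_1 ⊇ B_2 ⊇ ⋯ (where each B_n is a set of the form {x ∈ K : |x − a_n| ≤ r_n} or {x ∈ K : |x − a_n| < r_n} with a_n ∈ K, r_n > 0) has nonempty intersection. Assume further that K has dense value group, i.e., the image of |·| : K^× → ℝ_{>0} is dense in ℝ_{>0}. Then K, with the metric topology induced by d(x,y) = |x − y|, is not a separable topological space (it has no countable dense subset). -/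
/-- A ball in a field with an absolute value: a set of the form
`{x | v (x - a) ≤ r}` or `{x | v (x - a) < r}` with `r > 0`. -/
def IsBall {K : Type*} [Field K] (v : AbsoluteValue K ℝ) (B : Set K) : Prop :=
  ∃ (a : K) (r : ℝ), 0 < r ∧
    (B = {x : K | v (x - a) ≤ r} ∨ B = {x : K | v (x - a) < r})

private lemma aux_ge {K : Type*} [Field K] (v : AbsoluteValue K ℝ)
    (hna : ∀ x y : K, v (x + y) ≤ max (v x) (v y))
    {u w : K} (h : v w < v u) : v u ≤ v (u + w) := by
  have h1 : v u = v ((u + w) + (-w)) := by ring_nf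
  have := hna (u + w) (-w)
  rw [v.map_neg] at this
  rcases le_max_iff.mp (h1 ▸ this) with h2 | h2
  · exact h2
  · exact absurd h2 (not_le.mpr h)

/-- A spherically complete nonarchimedean valued field with dense value group
has no countable dense subset (for the metric d(x,y) = |x - y|). -/
theorem spherically_complete_dense_value_group_not_separable
    {K : Type*} [Field K] (v : AbsoluteValue K ℝ)
    (hna : ∀ x y : K, v (x + y) ≤ max (v x) (v y))
    (hsph : ∀ B : ℕ → Set K, (∀ n, IsBall v (B n)) → (∀ n, B (n + 1) ⊆ B n) →
      (⋂ n, B n).Nonempty)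
    (hdense : ∀ r s : ℝ, 0 < r → r < s → ∃ x : K, x ≠ 0 ∧ r < v x ∧ v x < s) :
    ¬ ∃ S : Set K, S.Countable ∧ ∀ x : K, ∀ ε : ℝ, 0 < ε → ∃ y ∈ S, v (x - y) < ε := by
  rintro ⟨S, hScnt, hSd⟩
  -- S is nonempty
  obtain ⟨y₀, hy₀⟩ : S.Nonempty := by
    rcases hSd 0 1 one_pos with ⟨y, hy, -⟩
    exact ⟨y, hy⟩
  obtain ⟨f, hf⟩ := Set.Countable.exists_surjective ⟨y₀, hy₀⟩ hScnt
  set r : ℕ → ℝ := fun n => 1 + (1/2 : ℝ) ^ n with hr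
  have hrpos : ∀ n, (1 : ℝ) < r n := by
    intro n
    have : (0:ℝ) < (1/2:ℝ)^n := by positivity
    simp only [hr]; linarith
  have hrdec : ∀ n, r (n + 1) < r n := by
    intro n
    have : (1/2:ℝ)^(n+1) < (1/2:ℝ)^n := by
      apply pow_lt_pow_right_of_lt_one₀ <;> norm_num
    simp only [hr]; linarith
  -- key step: given center a and point y, find a' with smaller ball inside avoiding y
  have step : ∀ (n : ℕ) (a y : K), ∃ a' : K,
      ({x : K | v (x - a') ≤ r (n+1)} ⊆ {x : K | v (x - a) ≤ r n}) ∧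
      r (n+1) < v (a' - y) := by
    intro n a y
    by_cases hc : r (n+1) < v (a - y)
    · refine ⟨a, ?_, hc⟩
      intro x hx
      exact le_of_lt (lt_of_le_of_lt hx (hrdec n))
    · push_neg at hc
      obtain ⟨z, hz0, hz1, hz2⟩ :=
        hdense (r (n+1)) (r n) (lt_trans one_pos (hrpos _)) (hrdec n)
      refine ⟨a + z, ?_, ?_⟩
      · intro x hx
        have h1 : v (x - a) = v ((x - (a+z)) + z) := by ring_nf
        have := hna (x - (a + z)) z
        rw [← h1] at this
        calc v (x - a) ≤ max (v (x - (a+z))) (v z) := this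
          _ ≤ max (r (n+1)) (v z) := by
              exact max_le_max hx le_rfl
          _ ≤ r n := max_le (le_of_lt (hrdec n)) (le_of_lt hz2)
      · have hlt : v (a - y) < v z := lt_of_le_of_lt hc hz1
        have h2 : v (z + (a - y)) = v (a + z - y) := by ring_nf
        have := aux_ge v hna hlt
        rw [h2] at this
        exact lt_of_lt_of_le hz1 this
  -- build centers recursively
  choose g hg1 hg2 using step
  let a : ℕ → K := fun n => Nat.rec 0 (fun m am => g m am (f m)) n
  have ha : ∀ n, a (n+1) = g n (a n) (f n) := fun n => rfl
  set B : ℕ → Set K := fun n => {x : K | v (x - a n) ≤ r n} with hB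
  have hball : ∀ n, IsBall v (B n) :=
    fun n => ⟨a n, r n, lt_trans one_pos (hrpos n), Or.inl rfl⟩
  have hnest : ∀ n, B (n+1) ⊆ B n := by
    intro n
    rw [hB]
    have := hg1 n (a n) (f n)
    rw [← ha n] at this
    exact this
  obtain ⟨x, hx⟩ := hsph B hball hnest
  simp only [Set.mem_iInter] at hx
  -- x is far from every f n
  have hfar : ∀ n, 1 < v (x - f n) := by
    intro n
    have h1 : v (x - a (n+1)) ≤ r (n+1) := hx (n+1)
    have h2 : r (n+1) < v (a (n+1) - f n) := by
      rw [ha n]; exact hg2 n (a n) (f n)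
    have hlt : v (x - a (n+1)) < v (a (n+1) - f n) := lt_of_le_of_lt h1 h2
    have h3 : v ((a (n+1) - f n) + (x - a (n+1))) = v (x - f n) := by ring_nf
    have := aux_ge v hna hlt
    rw [h3] at this
    exact lt_of_lt_of_le (lt_trans (hrpos _) h2) this
  obtain ⟨y, hyS, hyx⟩ := hSd x 1 one_pos
  obtain ⟨n, hn⟩ := hf ⟨y, hyS⟩
  have : f n = y := congrArg Subtype.val hn
  have h := hfar n
  rw [this] at h
  exact absurd hyx (not_lt.mpr (le_of_lt h))
end

section
/- Let K, L₁, L₂ be fields each equipped with a nonarchimedean absolute value, and let i₁ : K → L₁ and i₂ : K → L₂ be field homomorphisms with |i₁(x)| = |x| and |i₂(x)| = |x| for all x ∈ K. Assume i₁(K) is dense in L₁ for the absolute-value metric topology. Then: (1) there exists an amalgam (M, j₁, j₂) of L₁ and L₂ over K; and (2) any two amalgams (M, j₁, j₂) and (M′, j₁′, j₂′) of L₁ and L₂ over K are isomorphic, i.e., there is a field isomorphism φ : M → M′ with |φ(x)| = |x| for all x ∈ M, φ ∘ j₁ = j₁′, and φ ∘ j₂ = j₂′. -/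
universe u v w

/-- A field equipped with a nonarchimedean absolute value. -/
structure ValuedField : Type (u + 1) where
  carrier : Type u
  [fieldInst : Field carrier]
  absVal : AbsoluteValue carrier ℝ
  nonarch : ∀ x y : carrier, absVal (x + y) ≤ max (absVal x) (absVal y)

attribute [instance] ValuedField.fieldInst

/-- `(M, j₁, j₂)` is an amalgam of `L₁` and `L₂` over `K` (with respect to the morphisms
`i₁ : K → L₁`, `i₂ : K → L₂`): `j₁`, `j₂` are morphisms of valued fields with
`j₁ ∘ i₁ = j₂ ∘ i₂`, and `M` is generated as a field by `j₁(L₁) ∪ j₂(L₂)`. -/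
def IsAmalgam (K L₁ L₂ : ValuedField.{u})
    (i₁ : K.carrier →+* L₁.carrier) (i₂ : K.carrier →+* L₂.carrier)
    (M : ValuedField.{v})
    (j₁ : L₁.carrier →+* M.carrier) (j₂ : L₂.carrier →+* M.carrier) : Prop :=
  (∀ x, M.absVal (j₁ x) = L₁.absVal x) ∧
  (∀ x, M.absVal (j₂ x) = L₂.absVal x) ∧
  (∀ x, j₁ (i₁ x) = j₂ (i₂ x)) ∧
  Subfield.closure (Set.range ⇑j₁ ∪ Set.range ⇑j₂) = ⊤

open UniformSpace Filter

/-- Any normed field is a completable topological field. -/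
theorem myCompletableTopField (F : Type*) [NormedField F] : CompletableTopField F := by
  refine { toT0Space := inferInstance, nice := fun G G_cau hG => ?_ }
  rcases Filter.inf_eq_bot_iff.mp hG with ⟨V, hV, U, hU, hUV⟩
  rw [Set.inter_comm] at hUV
  rcases Metric.mem_nhds_iff.mp hV with ⟨ε, ε0, hball⟩
  have hU' : ∀ x ∈ U, ε ≤ ‖x‖ := by
    intro x hx
    by_contra hlt
    push_neg at hlt
    have hxV : x ∈ V := hball (by simpa [Metric.mem_ball, dist_zero_right] using hlt)
    have : x ∈ U ∩ V := ⟨hx, hxV⟩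
    simp [hUV] at this
  rw [Metric.cauchy_iff] at G_cau ⊢
  refine ⟨G_cau.1.map _, fun δ hδ => ?_⟩
  rcases G_cau.2 (δ * (ε * ε)) (by positivity) with ⟨t, ht, hdiam⟩
  refine ⟨(fun x => x⁻¹) '' (t ∩ U), Filter.image_mem_map (Filter.inter_mem ht hU), ?_⟩
  rintro _ ⟨x, ⟨hxt, hxU⟩, rfl⟩ _ ⟨y, ⟨hyt, hyU⟩, rfl⟩
  have hxε := hU' x hxU
  have hyε := hU' y hyU
  have hx0 : x ≠ 0 := by rintro rfl; simp at hxε; linarith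
  have hy0 : y ≠ 0 := by rintro rfl; simp at hyε; linarith
  rw [dist_inv_inv₀ hx0 hy0]
  have h1 : ε * ε ≤ ‖x‖ * ‖y‖ := by
    apply mul_le_mul hxε hyε ε0.le (le_trans ε0.le hxε)
  have h2 : dist x y < δ * (ε * ε) := hdiam x hxt y hyt
  have hpos : (0:ℝ) < ‖x‖ * ‖y‖ := mul_pos (lt_of_lt_of_le ε0 hxε) (lt_of_lt_of_le ε0 hyε)
  rw [div_lt_iff₀ hpos]
  calc dist x y < δ * (ε * ε) := h2
    _ ≤ δ * (‖x‖ * ‖y‖) := by nlinarith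

open UniformSpace

/-- The norm of a normed field as an absolute value. -/
noncomputable def normAbs (F : Type*) [NormedField F] : AbsoluteValue F ℝ where
  toFun := norm
  map_mul' := norm_mul
  nonneg' := norm_nonneg
  eq_zero' := fun _ => norm_eq_zero
  add_le' := norm_add_le

/-- Nonarchimedean property passes to the completion. -/
theorem completion_nonarch {F : Type*} [NormedField F] [CompletableTopField F]
    (hn : ∀ x y : F, ‖x + y‖ ≤ max ‖x‖ ‖y‖) :
    ∀ x y : Completion F, ‖x + y‖ ≤ max ‖x‖ ‖y‖ := by
  intro x y
  refine Completion.induction_on₂ x y ?_ (fun a b => ?_)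
  · apply isClosed_le <;> fun_prop
  · rw [← Completion.coe_add, Completion.norm_coe, Completion.norm_coe, Completion.norm_coe]
    exact hn a b

/-- Extension of an isometric ring hom along a dense isometric embedding. -/
theorem extend_exists {A B C : Type*} [NormedField A] [NormedField B] [NormedField C]
    [CompleteSpace C]
    (f : A →+* B) (hf : ∀ x, ‖f x‖ = ‖x‖) (df : DenseRange f)
    (g : A →+* C) (hg : ∀ x, ‖g x‖ = ‖x‖) :
    ∃ h : B →+* C, (∀ x, ‖h x‖ = ‖x‖) ∧ (∀ a, h (f a) = g a) ∧ Continuous h := by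
  have isoF : Isometry f := AddMonoidHomClass.isometry_of_norm f hf
  have isoG : Isometry g := AddMonoidHomClass.isometry_of_norm g hg
  have ue : IsUniformInducing f := isoF.isUniformInducing
  have ucg : UniformContinuous g := isoG.uniformContinuous
  have key : ∀ a, (IsDenseInducing.extendRingHom ue df ucg) (f a) = g a := fun a =>
    IsDenseInducing.extend_eq (ue.isDenseInducing df) ucg.continuous a
  have hcont : Continuous (IsDenseInducing.extendRingHom ue df ucg) :=
    (uniformContinuous_uniformly_extend ue df ucg).continuous
  refine ⟨IsDenseInducing.extendRingHom ue df ucg, ?_, key, hcont⟩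
  have heq := df.equalizer (continuous_norm.comp hcont) continuous_norm
    (funext fun a => by simp [Function.comp_apply, key, hf, hg])
  exact fun x => congrFun heq x

theorem closure_codRestrict_top {F X Y : Type*} [Field F] [Field X] [Field Y]
    (f : X →+* F) (g : Y →+* F)
    (S : Subfield F) (hS : S = Subfield.closure (Set.range f ∪ Set.range g))
    (f' : X →+* S) (g' : Y →+* S) (hf : ∀ x, (f' x : F) = f x) (hg : ∀ y, (g' y : F) = g y) :
    Subfield.closure (Set.range ⇑f' ∪ Set.range ⇑g') = ⊤ := by
  rw [eq_top_iff]
  rintro s -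
  have h1 : (Subfield.closure (Set.range ⇑f' ∪ Set.range ⇑g')).map S.subtype = S := by
    rw [RingHom.map_field_closure, Set.image_union]
    have e1 : (⇑S.subtype) '' Set.range ⇑f' = Set.range ⇑f := by
      rw [← Set.range_comp]
      exact congrArg _ (funext hf)
    have e2 : (⇑S.subtype) '' Set.range ⇑g' = Set.range ⇑g := by
      rw [← Set.range_comp]
      exact congrArg _ (funext hg)
    rw [e1, e2, ← hS]
  have h2 : (s : F) ∈ (Subfield.closure (Set.range ⇑f' ∪ Set.range ⇑g')).map S.subtype := by
    rw [h1]; exact s.2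
  rcases Subfield.mem_map.mp h2 with ⟨t, ht, hts⟩
  have : t = s := Subtype.ext hts
  rwa [this] at ht

theorem closure_withAbs_top {F X Y : Type*} [Field F] [Field X] [Field Y]
    (v : AbsoluteValue F ℝ) (J₁ : X →+* WithAbs v) (J₂ : Y →+* WithAbs v)
    (h : Subfield.closure (Set.range (fun x => (J₁ x).ofAbs) ∪
      Set.range (fun y => (J₂ y).ofAbs)) = ⊤) :
    Subfield.closure (Set.range ⇑J₁ ∪ Set.range ⇑J₂) = ⊤ := by
  rw [eq_top_iff]
  rintro z -
  have hz : z.ofAbs ∈ Subfield.closure (Set.range (fun x => (J₁ x).ofAbs) ∪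
      Set.range (fun y => (J₂ y).ofAbs)) := by rw [h]; trivial
  have e : Set.range (fun x => (J₁ x).ofAbs) ∪ Set.range (fun y => (J₂ y).ofAbs) =
      (WithAbs.equiv v).toRingHom '' (Set.range ⇑J₁ ∪ Set.range ⇑J₂) := by
    rw [Set.image_union, ← Set.range_comp, ← Set.range_comp]; rfl
  rw [e, ← RingHom.map_field_closure] at hz
  obtain ⟨t, ht, hts⟩ := Subfield.mem_map.mp hz
  have : t = z := (WithAbs.equiv v).injective hts
  rwa [this] at ht

/-- If `i₁ : K → L₁` and `i₂ : K → L₂` are morphisms of nonarchimedean valued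
fields with `i₁(K)` dense in `L₁`, then an amalgam of `L₁` and `L₂` over `K` exists, and
any two amalgams are isomorphic. -/
theorem exists_unique_amalgam (K L₁ L₂ : ValuedField.{u})
    (i₁ : K.carrier →+* L₁.carrier) (i₂ : K.carrier →+* L₂.carrier)
    (hi₁ : ∀ x, L₁.absVal (i₁ x) = K.absVal x)
    (hi₂ : ∀ x, L₂.absVal (i₂ x) = K.absVal x)
    (hdense : ∀ y : L₁.carrier, ∀ ε : ℝ, 0 < ε →
      ∃ x : K.carrier, L₁.absVal (y - i₁ x) < ε) :
    (∃ (M : ValuedField.{u}) (j₁ : L₁.carrier →+* M.carrier)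
        (j₂ : L₂.carrier →+* M.carrier), IsAmalgam K L₁ L₂ i₁ i₂ M j₁ j₂) ∧
    (∀ (M : ValuedField.{v}) (j₁ : L₁.carrier →+* M.carrier)
        (j₂ : L₂.carrier →+* M.carrier),
      IsAmalgam K L₁ L₂ i₁ i₂ M j₁ j₂ →
      ∀ (M' : ValuedField.{w}) (j₁' : L₁.carrier →+* M'.carrier)
        (j₂' : L₂.carrier →+* M'.carrier),
      IsAmalgam K L₁ L₂ i₁ i₂ M' j₁' j₂' →
      ∃ φ : M.carrier ≃+* M'.carrier,
        (∀ x, M'.absVal (φ x) = M.absVal x) ∧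
        (∀ x, φ (j₁ x) = j₁' x) ∧
        (∀ x, φ (j₂ x) = j₂' x)) := by
  classical
  let I₁ : WithAbs K.absVal →+* WithAbs L₁.absVal :=
    (WithAbs.equiv L₁.absVal).symm.toRingHom.comp
      (i₁.comp (WithAbs.equiv K.absVal).toRingHom)
  let I₂ : WithAbs K.absVal →+* WithAbs L₂.absVal :=
    (WithAbs.equiv L₂.absVal).symm.toRingHom.comp
      (i₂.comp (WithAbs.equiv K.absVal).toRingHom)
  have hI₁ : ∀ x, ‖I₁ x‖ = ‖x‖ := fun x => hi₁ x.ofAbs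
  have hI₂ : ∀ x, ‖I₂ x‖ = ‖x‖ := fun x => hi₂ x.ofAbs
  have dI₁ : DenseRange ⇑I₁ := by
    rw [Metric.denseRange_iff]
    intro y r hr
    obtain ⟨x, hx⟩ : ∃ x : WithAbs K.absVal, ‖y - I₁ x‖ < r := by
      obtain ⟨x, hx⟩ := hdense y.ofAbs r hr; exact ⟨WithAbs.toAbs _ x, hx⟩
    exact ⟨x, by rw [dist_eq_norm]; exact hx⟩
  haveI : CompletableTopField (WithAbs L₂.absVal) := myCompletableTopField _
  constructor
  · -- existence
    set C := UniformSpace.Completion (WithAbs L₂.absVal) with hC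
    let c : WithAbs L₂.absVal →+* C := UniformSpace.Completion.coeRingHom
    have hc : ∀ x, ‖c x‖ = ‖x‖ := fun x => UniformSpace.Completion.norm_coe x
    obtain ⟨h, hnorm, hcomm, hcont⟩ :=
      extend_exists I₁ hI₁ dI₁ (c.comp I₂) (fun x => by
        rw [RingHom.comp_apply, hc, hI₂])
    set S : Subfield C := Subfield.closure (Set.range ⇑h ∪ Set.range ⇑c) with hS
    have hmem₁ : ∀ x : WithAbs L₁.absVal, h x ∈ S :=
      fun x => Subfield.subset_closure (Or.inl ⟨x, rfl⟩)
    have hmem₂ : ∀ x : WithAbs L₂.absVal, c x ∈ S :=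
      fun x => Subfield.subset_closure (Or.inr ⟨x, rfl⟩)
    let M : ValuedField.{u} :=
      { carrier := S
        absVal := normAbs S
        nonarch := fun x y =>
          completion_nonarch (F := WithAbs L₂.absVal)
            (fun a b => L₂.nonarch a.ofAbs b.ofAbs) (x : C) (y : C) }
    let f₁ : L₁.carrier →+* C := h.comp (WithAbs.equiv L₁.absVal).symm.toRingHom
    let f₂ : L₂.carrier →+* C := c.comp (WithAbs.equiv L₂.absVal).symm.toRingHom
    let j₁ : L₁.carrier →+* M.carrier :=
      RingHom.codRestrict f₁ S (fun x => hmem₁ _)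
    let j₂ : L₂.carrier →+* M.carrier :=
      RingHom.codRestrict f₂ S (fun x => hmem₂ _)
    refine ⟨M, j₁, j₂, fun x => hnorm _, fun x => hc _, fun x => Subtype.ext (hcomm (WithAbs.toAbs _ x)), ?_⟩
    refine closure_codRestrict_top f₁ f₂ S ?_ j₁ j₂ (fun x => rfl) (fun x => rfl)
    have e1 : Set.range ⇑f₁ = Set.range ⇑h := by
      rw [RingHom.coe_comp, Set.range_comp]
      rw [show Set.range ⇑(WithAbs.equiv L₁.absVal).symm.toRingHom = Set.univ from
        (WithAbs.equiv L₁.absVal).symm.surjective.range_eq, Set.image_univ]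
    have e2 : Set.range ⇑f₂ = Set.range ⇑c := by
      rw [RingHom.coe_comp, Set.range_comp]
      rw [show Set.range ⇑(WithAbs.equiv L₂.absVal).symm.toRingHom = Set.univ from
        (WithAbs.equiv L₂.absVal).symm.surjective.range_eq, Set.image_univ]
    rw [hS, e1, e2]
  · -- uniqueness
    rintro M j₁ j₂ ⟨a1, a2, a3, a4⟩ M' j₁' j₂' ⟨a1', a2', a3', a4'⟩
    let J₁ : WithAbs L₁.absVal →+* WithAbs M.absVal :=
      (WithAbs.equiv M.absVal).symm.toRingHom.comp
        (j₁.comp (WithAbs.equiv L₁.absVal).toRingHom)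
    let J₂ : WithAbs L₂.absVal →+* WithAbs M.absVal :=
      (WithAbs.equiv M.absVal).symm.toRingHom.comp
        (j₂.comp (WithAbs.equiv L₂.absVal).toRingHom)
    let J₁' : WithAbs L₁.absVal →+* WithAbs M'.absVal :=
      (WithAbs.equiv M'.absVal).symm.toRingHom.comp
        (j₁'.comp (WithAbs.equiv L₁.absVal).toRingHom)
    let J₂' : WithAbs L₂.absVal →+* WithAbs M'.absVal :=
      (WithAbs.equiv M'.absVal).symm.toRingHom.comp
        (j₂'.comp (WithAbs.equiv L₂.absVal).toRingHom)
    have hJ₁ : ∀ x, ‖J₁ x‖ = ‖x‖ := fun x => a1 x.ofAbs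
    have hJ₂ : ∀ x, ‖J₂ x‖ = ‖x‖ := fun x => a2 x.ofAbs
    have hJ₁' : ∀ x, ‖J₁' x‖ = ‖x‖ := fun x => a1' x.ofAbs
    have hJ₂' : ∀ x, ‖J₂' x‖ = ‖x‖ := fun x => a2' x.ofAbs
    have ha3 : ∀ x, J₁ (I₁ x) = J₂ (I₂ x) := fun x => congrArg (WithAbs.toAbs M.absVal) (a3 x.ofAbs)
    have ha3' : ∀ x, J₁' (I₁ x) = J₂' (I₂ x) := fun x => congrArg (WithAbs.toAbs M'.absVal) (a3' x.ofAbs)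
    have ha4 : Subfield.closure (Set.range ⇑J₁ ∪ Set.range ⇑J₂) =
        (⊤ : Subfield (WithAbs M.absVal)) :=
      closure_withAbs_top _ J₁ J₂ (by
        rw [show Set.range (fun x => (J₁ x).ofAbs) = Set.range j₁ from
          (WithAbs.ofAbs_surjective _).range_comp _,
          show Set.range (fun x => (J₂ x).ofAbs) = Set.range j₂ from
          (WithAbs.ofAbs_surjective _).range_comp _]
        exact a4)
    have ha4' : Subfield.closure (Set.range ⇑J₁' ∪ Set.range ⇑J₂') =
        (⊤ : Subfield (WithAbs M'.absVal)) :=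
      closure_withAbs_top _ J₁' J₂' (by
        rw [show Set.range (fun x => (J₁' x).ofAbs) = Set.range j₁' from
          (WithAbs.ofAbs_surjective _).range_comp _,
          show Set.range (fun x => (J₂' x).ofAbs) = Set.range j₂' from
          (WithAbs.ofAbs_surjective _).range_comp _]
        exact a4')
    haveI : IsTopologicalDivisionRing (WithAbs M.absVal) :=
      { toIsTopologicalRing := inferInstance, toContinuousInv₀ := inferInstance }
    have hd2 : DenseRange ⇑J₂ := by
      have hsub : Set.range ⇑J₁ ⊆ closure (Set.range ⇑J₂) := by
        rintro _ ⟨y, rfl⟩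
        rw [Metric.mem_closure_iff]
        intro ε hε
        obtain ⟨x, hx⟩ : ∃ x : WithAbs K.absVal, ‖y - I₁ x‖ < ε := by
          obtain ⟨x, hx⟩ := hdense y.ofAbs ε hε; exact ⟨WithAbs.toAbs _ x, hx⟩
        refine ⟨J₂ (I₂ x), ⟨_, rfl⟩, ?_⟩
        rw [dist_eq_norm, ← ha3 x, ← map_sub]
        calc ‖J₁ (y - I₁ x)‖ = ‖y - I₁ x‖ := hJ₁ _
          _ < ε := hx
      have htop : (J₂.fieldRange).topologicalClosure = ⊤ := by
        rw [eq_top_iff, ← ha4]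
        apply Subfield.closure_le.2
        rintro z (hz | hz)
        · show z ∈ closure (J₂.fieldRange : Set (WithAbs M.absVal))
          rw [RingHom.coe_fieldRange]
          exact hsub hz
        · exact (J₂.fieldRange).le_topologicalClosure
            (by rw [← RingHom.coe_fieldRange] at hz; exact hz)
      have hset : (J₂.fieldRange.topologicalClosure : Set (WithAbs M.absVal)) = Set.univ := by
        rw [htop, Subfield.coe_top]
      have : closure (Set.range ⇑J₂) = Set.univ := by
        rw [← RingHom.coe_fieldRange]
        exact hset
      rw [DenseRange, dense_iff_closure_eq, this]
    haveI : CompletableTopField (WithAbs M'.absVal) := myCompletableTopField _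
    set C' := UniformSpace.Completion (WithAbs M'.absVal) with hC'
    let c : WithAbs M'.absVal →+* C' := UniformSpace.Completion.coeRingHom
    have hc : ∀ x, ‖c x‖ = ‖x‖ := fun x => UniformSpace.Completion.norm_coe x
    have cinj : Function.Injective ⇑c := UniformSpace.Completion.coe_injective _
    obtain ⟨h, hnorm, hcomm, hcont⟩ :=
      extend_exists J₂ hJ₂ hd2 (c.comp J₂') (fun x => by
        rw [RingHom.comp_apply, hc, hJ₂'])
    have heq1 : ⇑h ∘ ⇑J₁ = ⇑c ∘ ⇑J₁' := by
      refine dI₁.equalizer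
        (hcont.comp (AddMonoidHomClass.isometry_of_norm J₁ hJ₁).continuous)
        (UniformSpace.Completion.continuous_coe (WithAbs M'.absVal) |>.comp
          (AddMonoidHomClass.isometry_of_norm J₁' hJ₁').continuous)
        (funext fun x => ?_)
      show h (J₁ (I₁ x)) = c (J₁' (I₁ x))
      rw [ha3 x, ha3' x]
      exact hcomm (I₂ x)
    have hJ1 : ∀ y, h (J₁ y) = c (J₁' y) := fun y => congrFun heq1 y
    have heq2 : ⇑h ∘ ⇑J₂ = ⇑c ∘ ⇑J₂' := funext fun a => hcomm a
    have hrange : h.fieldRange = c.fieldRange := by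
      have himg : (⇑h '' (Set.range ⇑J₁ ∪ Set.range ⇑J₂)) =
          (⇑c '' (Set.range ⇑J₁' ∪ Set.range ⇑J₂')) := by
        rw [Set.image_union, Set.image_union, ← Set.range_comp, ← Set.range_comp,
          ← Set.range_comp, ← Set.range_comp, heq1, heq2]
      rw [RingHom.fieldRange_eq_map, RingHom.fieldRange_eq_map, ← ha4, ← ha4',
        RingHom.map_field_closure, RingHom.map_field_closure, himg]
    have hmem : ∀ x : WithAbs M.absVal, ∃ y, c y = h x := by
      intro x
      have : h x ∈ c.fieldRange := by rw [← hrange]; exact ⟨x, rfl⟩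
      exact this
    let gfun : WithAbs M.absVal → WithAbs M'.absVal := fun x => Classical.choose (hmem x)
    have hgc : ∀ x, c (gfun x) = h x := fun x => Classical.choose_spec (hmem x)
    let ghom : WithAbs M.absVal →+* WithAbs M'.absVal :=
      { toFun := gfun
        map_one' := cinj (by simp only [hgc, map_one])
        map_mul' := fun a b => cinj (by simp only [hgc, map_mul])
        map_zero' := cinj (by simp only [hgc, map_zero])
        map_add' := fun a b => cinj (by simp only [hgc, map_add]) }
    have hbij : Function.Bijective ⇑ghom := by
      constructor
      · intro a b hab
        apply h.injective
        rw [← hgc a, ← hgc b]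
        exact congrArg c hab
      · intro y
        have : c y ∈ h.fieldRange := by rw [hrange]; exact ⟨y, rfl⟩
        obtain ⟨x, hx⟩ := this
        refine ⟨x, cinj ?_⟩
        show c (gfun x) = c y
        rw [hgc, hx]
    let φ₀ : WithAbs M.absVal ≃+* WithAbs M'.absVal := RingEquiv.ofBijective ghom hbij
    let φ : M.carrier ≃+* M'.carrier :=
      ((WithAbs.equiv M.absVal).symm.trans φ₀).trans (WithAbs.equiv M'.absVal)
    refine ⟨φ, fun x => ?_, fun x => ?_, fun x => ?_⟩
    · have e1 : c (gfun (WithAbs.toAbs _ x)) = h (WithAbs.toAbs _ x) := hgc _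
      have e2 := hnorm (WithAbs.toAbs _ x)
      calc M'.absVal (φ x) = ‖gfun (WithAbs.toAbs _ x)‖ := rfl
        _ = ‖c (gfun (WithAbs.toAbs _ x))‖ := (hc _).symm
        _ = ‖h (WithAbs.toAbs _ x)‖ := by rw [e1]
        _ = M.absVal x := e2
    · show WithAbs.ofAbs (gfun (J₁ (WithAbs.toAbs _ x))) = WithAbs.ofAbs (J₁' (WithAbs.toAbs _ x))
      congr 1
      apply cinj
      rw [hgc]
      exact hJ1 _
    · show WithAbs.ofAbs (gfun (J₂ (WithAbs.toAbs _ x))) = WithAbs.ofAbs (J₂' (WithAbs.toAbs _ x))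
      congr 1
      apply cinj
      rw [hgc]
      exact hcomm _
end

section
/- An open subset of a local dendrite is path-connected if and only if it is connected. -/
open Topology

/-- A continuum: a nonempty compact connected metrizable topological space. -/
def IsContinuum (X : Type*) [TopologicalSpace X] : Prop :=
  Nonempty X ∧ CompactSpace X ∧ ConnectedSpace X ∧ TopologicalSpace.MetrizableSpace X

/-- A simple closed curve in `X`: a subspace homeomorphic to the circle. -/
def IsSimpleClosedCurve {X : Type*} [TopologicalSpace X] (S : Set X) : Prop :=
  Nonempty (S ≃ₜ AddCircle (1 : ℝ))

/-- A dendrite: a locally connected continuum containing no simple closed curve. -/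
def IsDendrite (X : Type*) [TopologicalSpace X] : Prop :=
  IsContinuum X ∧ LocallyConnectedSpace X ∧ ∀ S : Set X, ¬ IsSimpleClosedCurve S

/-- A local dendrite: a continuum each of whose points has a neighborhood
that is a dendrite. -/
def IsLocalDendrite (X : Type*) [TopologicalSpace X] : Prop :=
  IsContinuum X ∧ ∀ x : X, ∃ N : Set X, N ∈ 𝓝 x ∧ IsDendrite N

/-- A branch point of `X`: a point whose complement has at least three
connected components. -/
def IsBranchPoint {X : Type*} [TopologicalSpace X] (x : X) : Prop :=
  ∃ u v w : ConnectedComponents (↥({x}ᶜ : Set X)), u ≠ v ∧ u ≠ w ∧ v ≠ w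

/-- `X ∖ {x}` has countably infinitely many connected components
(i.e. there are ℵ₀ branches at `x`). -/
def HasAlephNullBranchesAt (X : Type*) [TopologicalSpace X] (x : X) : Prop :=
  Countable (ConnectedComponents (↥({x}ᶜ : Set X))) ∧
    Infinite (ConnectedComponents (↥({x}ᶜ : Set X)))

section AuxPeano

open Metric Set Filter

variable {Y : Type*} [MetricSpace Y]

lemma preconnected_reflTransGen {C : Set Y} (hC : IsPreconnected C) {x y : Y}
    (hx : x ∈ C) (hy : y ∈ C) {δ : ℝ} (hδ : 0 < δ) :
    Relation.ReflTransGen (fun a b => b ∈ C ∧ dist a b < δ) x y := by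
  set r : Y → Y → Prop := fun a b => b ∈ C ∧ dist a b < δ with hr
  set S : Set Y := {z | z ∈ C ∧ Relation.ReflTransGen r x z} with hS
  by_contra hcon
  set u : Set Y := ⋃ z ∈ S, ball z δ with hu
  set v : Set Y := ⋃ z ∈ C \ S, ball z δ with hv
  have hou : IsOpen u := isOpen_biUnion fun _ _ => isOpen_ball
  have hov : IsOpen v := isOpen_biUnion fun _ _ => isOpen_ball
  have hsub : C ⊆ u ∪ v := by
    intro z hz
    by_cases h : Relation.ReflTransGen r x z
    · exact Or.inl (mem_biUnion ⟨hz, h⟩ (mem_ball_self hδ))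
    · exact Or.inr (mem_biUnion ⟨hz, fun h' => h h'.2⟩ (mem_ball_self hδ))
  have hxu : (C ∩ u).Nonempty :=
    ⟨x, hx, mem_biUnion ⟨hx, Relation.ReflTransGen.refl⟩ (mem_ball_self hδ)⟩
  have hyv : (C ∩ v).Nonempty := by
    refine ⟨y, hy, mem_biUnion ⟨hy, fun h' => hcon h'.2⟩ (mem_ball_self hδ)⟩
  obtain ⟨z, hzC, hzu, hzv⟩ := hC u v hou hov hsub hxu hyv
  rw [hu, mem_iUnion₂] at hzu
  rw [hv, mem_iUnion₂] at hzv
  obtain ⟨a, haS, haz⟩ := hzu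
  obtain ⟨b, hbCS, hbz⟩ := hzv
  have hzS : Relation.ReflTransGen r x z :=
    haS.2.tail ⟨hzC, by rw [dist_comm]; exact haz⟩
  exact hbCS.2 ⟨hbCS.1, hzS.tail ⟨hbCS.1, hbz⟩⟩

lemma exists_chain_fun_given {C : Set Y} (hC : IsPreconnected C) {x y : Y}
    (hx : x ∈ C) (hy : y ∈ C) {δ : ℝ} (hδ : 0 < δ)
    (htg : Relation.ReflTransGen (fun a b => b ∈ C ∧ dist a b < δ) x y) :
    ∃ m : ℕ, ∃ g : ℕ → Y, g 0 = x ∧ (∀ j, m ≤ j → g j = y) ∧ (∀ j, g j ∈ C) ∧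
      ∀ j, dist (g j) (g (j + 1)) < δ := by
  obtain ⟨l, hchain, hlast⟩ := List.exists_isChain_cons_of_relationReflTransGen htg
  set r : Y → Y → Prop := fun a b => b ∈ C ∧ dist a b < δ with hr
  set L : List Y := x :: l with hL
  have hLlen : L.length = l.length + 1 := rfl
  set m := l.length with hm
  set g : ℕ → Y := fun j => L.getD j y with hg
  have hchain' : List.Chain' r L := hchain
  have key : ∀ (l' : List Y) (a : Y), List.Chain r a l' → ∀ z ∈ l', z ∈ C := by
    intro l'
    induction l' with
    | nil => intro a _ z hz; simp at hz
    | cons b t ih =>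
      intro a hch z hz
      rw [show List.Chain r a (b :: t) ↔ _ from List.isChain_cons_cons] at hch
      rcases List.mem_cons.mp hz with h' | h'
      · exact h' ▸ hch.1.1
      · exact ih b hch.2 z h'
  have hmemL : ∀ z ∈ L, z ∈ C := by
    intro z hz
    rcases List.mem_cons.mp hz with h | h
    · exact h ▸ hx
    · exact key l x hchain z h
  have hgy : ∀ j, m ≤ j → g j = y := by
    intro j hj
    rcases eq_or_lt_of_le hj with h | h
    · have hjlt : j < L.length := by omega
      have h1 : g j = L[j] := List.getD_eq_getElem L y hjlt
      have h2 := List.getLast_eq_getElem (l := L) (by simp)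
      rw [hlast] at h2
      rw [h1, h2]
      congr 1
      omega
    · exact List.getD_eq_default L y (by omega)
  have hgmem : ∀ j, g j ∈ C := by
    intro j
    by_cases hj : j < L.length
    · have h1 : g j = L[j] := List.getD_eq_getElem L y hj
      rw [h1]
      exact hmemL _ (List.getElem_mem hj)
    · have h1 : g j = y := List.getD_eq_default L y (by omega)
      rw [h1]; exact hy
  refine ⟨m, g, List.getD_cons_zero, hgy, hgmem, fun j => ?_⟩
  by_cases hj : j < m
  · have hj1 : j < L.length := by omega
    have hj2 : j + 1 < L.length := by omega
    have h1 : g j = L[j] := List.getD_eq_getElem L y hj1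
    have h2 : g (j+1) = L[j+1] := List.getD_eq_getElem L y hj2
    have := List.isChain_iff_getElem.mp hchain' j (by simp [hLlen]; omega)
    rw [h1, h2]
    simpa using this.2
  · rw [hgy j (by omega), hgy (j+1) (by omega)]
    simpa using hδ

lemma aux_chain_fun {C : Set Y} (hC : IsPreconnected C) {x y : Y}
    (hx : x ∈ C) (hy : y ∈ C) {δ : ℝ} (hδ : 0 < δ) :
    ∃ m : ℕ, ∃ g : ℕ → Y, g 0 = x ∧ (∀ j, m ≤ j → g j = y) ∧ (∀ j, g j ∈ C) ∧
      ∀ j, dist (g j) (g (j + 1)) < δ :=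
  exists_chain_fun_given hC hx hy hδ (preconnected_reflTransGen hC hx hy hδ)

lemma aux_ulc [CompactSpace Y] [LocallyConnectedSpace Y]
    {ε : ℝ} (hε : 0 < ε) :
    ∃ δ : ℝ, 0 < δ ∧ δ ≤ ε ∧ ∀ x y : Y, dist x y < δ →
      ∃ C : Set Y, IsPreconnected C ∧ x ∈ C ∧ y ∈ C ∧
        ∀ a ∈ C, ∀ b ∈ C, dist a b ≤ ε := by
  have hV : ∀ p : Y, ∃ V : Set Y, V ⊆ ball p (ε / 2) ∧ IsOpen V ∧ p ∈ V ∧ IsConnected V := by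
    intro p
    exact locallyConnectedSpace_iff_subsets_isOpen_isConnected.mp ‹_› p _
      (ball_mem_nhds p (by linarith))
  choose V hVsub hVopen hVmem hVconn using hV
  obtain ⟨δ₀, hδ₀, hleb⟩ := lebesgue_number_lemma_of_metric isCompact_univ hVopen
    (fun p _ => mem_iUnion.mpr ⟨p, hVmem p⟩)
  refine ⟨min δ₀ ε, lt_min hδ₀ hε, min_le_right _ _, fun x y hxy => ?_⟩
  obtain ⟨p, hp⟩ := hleb x (mem_univ x)
  refine ⟨V p, (hVconn p).isPreconnected, hp (mem_ball_self hδ₀),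
    hp (by simp only [mem_ball]; rw [dist_comm]; exact hxy.trans_le (min_le_left _ _)),
    fun a ha b hb => ?_⟩
  have h1 := hVsub p ha
  have h2 := hVsub p hb
  rw [mem_ball] at h1 h2
  calc dist a b ≤ dist a p + dist p b := dist_triangle _ _ _
    _ ≤ ε := by rw [dist_comm p b] at *; linarith

lemma aux_subdivision_step {N : ℕ} (hN : 1 ≤ N) {c : ℕ → Y} {ε' δ'' : ℝ} (hδ'' : 0 < δ'')
    (hinv : ∀ i < N, ∃ C : Set Y, IsPreconnected C ∧ c i ∈ C ∧ c (i + 1) ∈ C ∧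
      ∀ a ∈ C, ∀ b ∈ C, dist a b ≤ ε') :
    ∃ k : ℕ, 1 ≤ k ∧ ∃ c' : ℕ → Y,
      (∀ i ≤ N, c' (k * i) = c i) ∧
      (∀ j ≤ k * N, dist (c' j) (c (j / k)) ≤ ε') ∧
      (∀ j < k * N, dist (c' j) (c' (j + 1)) < δ'') := by
  choose C hCconn hCmem1 hCmem2 hCdiam using hinv
  have hchain : ∀ i : ℕ, ∃ (m : ℕ) (g : ℕ → Y), ∀ hi : i < N,
      g 0 = c i ∧ (∀ j, m ≤ j → g j = c (i + 1)) ∧ (∀ j, g j ∈ C i hi) ∧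
      ∀ j, dist (g j) (g (j + 1)) < δ'' := by
    intro i
    by_cases hi : i < N
    · obtain ⟨m, g, h⟩ := aux_chain_fun (hCconn i hi) (hCmem1 i hi) (hCmem2 i hi) hδ''
      exact ⟨m, g, fun _ => h⟩
    · exact ⟨0, fun _ => c i, fun hi' => absurd hi' hi⟩
  choose m g hg using hchain
  set k : ℕ := 1 + (Finset.range N).sup m with hk
  have hk1 : 1 ≤ k := by omega
  have hkpos : 0 < k := hk1
  have hmk : ∀ i < N, m i ≤ k := by
    intro i hi
    have := Finset.le_sup (f := m) (Finset.mem_range.mpr hi)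
    omega
  set c' : ℕ → Y := fun j => if hj : j < k * N then g (j / k) (j % k) else c N with hc'
  have hdivlt : ∀ j < k * N, j / k < N := by
    intro j hj
    exact Nat.div_lt_of_lt_mul hj
  -- c' j at j < k*N, explicit
  have hc'val : ∀ j (hj : j < k * N), c' j = g (j / k) (j % k) := fun j hj => dif_pos hj
  have hc'top : ∀ j, ¬ j < k * N → c' j = c N := fun j hj => dif_neg hj
  have hε'nonneg : 0 ≤ ε' := by
    have := hCdiam 0 hN _ (hCmem1 0 hN) _ (hCmem1 0 hN)
    simpa using this
  refine ⟨k, hk1, c', ?_, ?_, ?_⟩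
  · intro i hi
    rcases lt_or_eq_of_le hi with hi' | hi'
    · have hlt : k * i < k * N := (Nat.mul_lt_mul_left hkpos).mpr hi'
      rw [hc'val _ hlt, Nat.mul_div_cancel_left i hkpos, Nat.mul_mod_right]
      exact (hg i hi').1
    · subst hi'
      exact hc'top _ (lt_irrefl _)
  · intro j hj
    rcases lt_or_eq_of_le hj with hj' | hj'
    · have hi : j / k < N := hdivlt j hj'
      rw [hc'val _ hj']
      exact hCdiam _ hi _ ((hg _ hi).2.2.1 _) _ (hCmem1 _ hi)
    · subst hj'
      rw [hc'top _ (lt_irrefl _), Nat.mul_div_cancel_left N hkpos]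
      simpa using hε'nonneg
  · intro j hj
    set i := j / k with hi
    set q := j % k with hq
    have hiN : i < N := hdivlt j hj
    have hqk : q < k := Nat.mod_lt _ hkpos
    have hjeq : k * i + q = j := Nat.div_add_mod j k
    have hgi := hg i hiN
    rw [hc'val _ hj]
    by_cases hq1 : q + 1 < k
    · -- j+1 in same segment
      have hexp : k * (i + 1) = k * i + k := by ring
      have h5 : k * (i + 1) ≤ k * N := Nat.mul_le_mul_left k hiN
      have hj1 : j + 1 < k * N := by omega
      rw [hc'val _ hj1]
      have hjsplit : j + 1 = k * i + (q + 1) := by omega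
      have hd1 : (j+1) / k = i := by
        rw [hjsplit, Nat.mul_add_div hkpos, Nat.div_eq_of_lt hq1]
        omega
      have hd2 : (j+1) % k = q + 1 := by
        rw [hjsplit, Nat.mul_add_mod, Nat.mod_eq_of_lt hq1]
      rw [hd1, hd2]
      exact hgi.2.2.2 q
    · -- boundary: q = k - 1
      have hqe : q + 1 = k := by omega
      have hexp : k * (i + 1) = k * i + k := by ring
      have hj1eq : j + 1 = k * (i + 1) := by omega
      have hnext : c' (j+1) = c (i+1) := by
        by_cases hlt : j + 1 < k * N
        · rw [hc'val _ hlt, hj1eq, Nat.mul_div_cancel_left _ hkpos, Nat.mul_mod_right]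
          exact (hg (i+1) (by
            have h6 : k * (i+1) < k * N := hj1eq ▸ hlt
            exact lt_of_mul_lt_mul_left h6 (Nat.zero_le k))).1
        · rw [hc'top _ hlt]
          have h7 : i + 1 = N := by
            have h1 : k * N ≤ k * (i+1) := by omega
            have h2 := Nat.le_of_mul_le_mul_left h1 hkpos
            omega
          rw [h7]
      rw [hnext]
      have : c (i+1) = g i (q+1) := by
        rw [(hgi.2.1 (q+1) (by have := hmk i hiN; omega))]
      rw [this]
      exact hgi.2.2.2 q

lemma aux_exists_small_path [CompactSpace Y] [LocallyConnectedSpace Y]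
    {ε : ℝ} (hε : 0 < ε) :
    ∃ δ : ℝ, 0 < δ ∧ ∀ x y : Y, dist x y < δ →
      ∃ γ : Path x y, ∀ t, dist (γ t) x ≤ 2 * ε := by
  have hpos : ∀ n : ℕ, 0 < ε / 2 ^ (n + 1) := fun n => by positivity
  have hULC := fun n : ℕ => aux_ulc (Y := Y) (hpos n)
  choose D hDpos hDle hD using hULC
  refine ⟨D 0, hDpos 0, fun x y hxy => ?_⟩
  set Good : ℕ → ℕ → (ℕ → Y) → Prop := fun n N c =>
    1 ≤ N ∧ c 0 = x ∧ c N = y ∧ ∀ i < N, dist (c i) (c (i + 1)) < D n with hGood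
  set Rel : ℕ → ℕ × (ℕ → Y) → ℕ × (ℕ → Y) → Prop := fun n p q =>
    ∃ k : ℕ, 1 ≤ k ∧ q.1 = k * p.1 ∧ (∀ i ≤ p.1, q.2 (k * i) = p.2 i) ∧
      ∀ j ≤ q.1, dist (q.2 j) (p.2 (j / k)) ≤ ε / 2 ^ (n + 1) with hRel
  have hstep : ∀ n (p : ℕ × (ℕ → Y)), ∃ q : ℕ × (ℕ → Y),
      Good n p.1 p.2 → Good (n + 1) q.1 q.2 ∧ Rel n p q := by
    intro n ⟨N, c⟩
    by_cases hgood : Good n N c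
    · obtain ⟨hN, hc0, hcN, hmesh⟩ := hgood
      have hinv : ∀ i < N, ∃ C : Set Y, IsPreconnected C ∧ c i ∈ C ∧ c (i + 1) ∈ C ∧
          ∀ a ∈ C, ∀ b ∈ C, dist a b ≤ ε / 2 ^ (n + 1) :=
        fun i hi => hD n _ _ (hmesh i hi)
      obtain ⟨k, hk1, c', hagree, hclose, hmesh'⟩ :=
        aux_subdivision_step hN (hDpos (n + 1)) hinv
      refine ⟨(k * N, c'), fun _ => ⟨⟨?_, ?_, ?_, hmesh'⟩, k, hk1, rfl, hagree, hclose⟩⟩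
      · exact Nat.one_le_iff_ne_zero.mpr (by positivity)
      · have := hagree 0 (Nat.zero_le _)
        simpa [hc0] using this
      · have := hagree N le_rfl
        simpa [hcN] using this
    · exact ⟨(N, c), fun h => absurd h hgood⟩
  choose F hF using hstep
  set p₀ : ℕ × (ℕ → Y) := (1, fun i => if i = 0 then x else y) with hp₀
  set seq : ℕ → ℕ × (ℕ → Y) := fun n => Nat.rec p₀ F n with hseq
  have hseqsucc : ∀ n, seq (n + 1) = F n (seq n) := fun n => rfl
  have hgood : ∀ n, Good n (seq n).1 (seq n).2 := by
    intro n
    induction n with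
    | zero =>
      refine ⟨le_rfl, rfl, ?_, ?_⟩
      · show (if (1 : ℕ) = 0 then x else y) = y
        simp
      · intro i hi
        have hi1 : i < 1 := hi
        have : i = 0 := by omega
        subst this
        show dist (if (0:ℕ) = 0 then x else y) (if (1:ℕ) = 0 then x else y) < D 0
        simpa using hxy
    | succ n ih =>
      rw [hseqsucc]
      exact (hF n (seq n) ih).1
  have hrel : ∀ n, Rel n (seq n) (seq (n + 1)) := by
    intro n
    rw [hseqsucc]
    exact (hF n (seq n) (hgood n)).2
  set f : ℕ → ℝ → Y := fun n t => (seq n).2 ⌊t * (seq n).1⌋₊ with hf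
  have hfloor_le : ∀ (t : ℝ), t ≤ 1 → ∀ N : ℕ, ⌊t * N⌋₊ ≤ N := by
    intro t ht N
    calc ⌊t * N⌋₊ ≤ ⌊(N : ℝ)⌋₊ :=
      Nat.floor_le_floor (by nlinarith [Nat.cast_nonneg (α := ℝ) N])
    _ = N := Nat.floor_natCast N
  have hconsec : ∀ n, ∀ t : ℝ, 0 ≤ t → t ≤ 1 →
      dist (f (n + 1) t) (f n t) ≤ ε / 2 ^ (n + 1) := by
    intro n t ht0 ht1
    obtain ⟨k, hk1, hNk, hagree, hclose⟩ := hrel n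
    set N := (seq n).1
    set N' := (seq (n + 1)).1
    have hj : ⌊t * N'⌋₊ ≤ N' := hfloor_le t ht1 N'
    have hdiv : ⌊t * N'⌋₊ / k = ⌊t * N⌋₊ := by
      have h1 : (t * N') = (t * N) * k := by
        rw [hNk]; push_cast; ring
      rw [h1, ← Nat.floor_div_natCast ((t * N) * k) k]
      congr 1
      rw [mul_div_assoc]
      rw [div_self (by positivity : (k:ℝ) ≠ 0), mul_one]
    have := hclose _ hj
    rwa [hdiv] at this
  have hsame : ∀ n, ∀ s t : ℝ, 0 ≤ s → s ≤ 1 → 0 ≤ t → t ≤ 1 →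
      |s - t| * (seq n).1 ≤ 1 → dist (f n s) (f n t) ≤ ε / 2 ^ (n + 1) := by
    intro n s t hs0 hs1 ht0 ht1 hst
    set N := (seq n).1 with hNdef
    obtain ⟨hN, hc0, hcN, hmesh⟩ := hgood n
    wlog h : t ≤ s generalizing s t
    · rw [dist_comm]
      exact this t s ht0 ht1 hs0 hs1 (by rwa [abs_sub_comm]) (le_of_not_ge h)
    have hNn : (0:ℝ) ≤ (N:ℝ) := Nat.cast_nonneg N
    have habs : s - t ≤ |s - t| := le_abs_self _
    have hij : ⌊t * N⌋₊ ≤ ⌊s * N⌋₊ :=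
      Nat.floor_le_floor (by nlinarith)
    have hij2 : ⌊s * N⌋₊ ≤ ⌊t * N⌋₊ + 1 := by
      have h1 : s * N ≤ t * N + 1 := by nlinarith
      have h2 : ⌊t * N + 1⌋₊ = ⌊t * N⌋₊ + 1 := Nat.floor_add_one (by positivity)
      have h3 := Nat.floor_le_floor h1
      omega
    rcases eq_or_lt_of_le hij with he | hl
    · show dist ((seq n).2 ⌊s * N⌋₊) ((seq n).2 ⌊t * N⌋₊) ≤ ε / 2 ^ (n + 1)
      rw [← he]
      simpa using (hpos n).le
    · have he : ⌊s * N⌋₊ = ⌊t * N⌋₊ + 1 := by omega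
      have hiN : ⌊t * N⌋₊ < N := by
        have := hfloor_le s hs1 N
        omega
      show dist ((seq n).2 ⌊s * N⌋₊) ((seq n).2 ⌊t * N⌋₊) ≤ ε / 2 ^ (n + 1)
      rw [he, dist_comm]
      exact le_trans (hmesh _ hiN).le (hDle n)
  -- limits
  have hgeom : ∀ t : ℝ, 0 ≤ t → t ≤ 1 → ∀ n,
      dist (f n t) (f (n + 1) t) ≤ (ε / 2) * (1 / 2) ^ n := by
    intro t ht0 ht1 n
    rw [dist_comm]
    calc dist (f (n + 1) t) (f n t) ≤ ε / 2 ^ (n + 1) := hconsec n t ht0 ht1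
    _ = (ε / 2) * (1 / 2) ^ n := by
      rw [div_pow, one_pow, pow_succ]
      ring
  have hcauchy : ∀ t : unitInterval, ∃ a, Tendsto (fun n => f n t) atTop (𝓝 a) := by
    intro t
    apply cauchySeq_tendsto_of_complete
    exact cauchySeq_of_le_geometric (1/2) (ε/2) (by norm_num) (hgeom t t.2.1 t.2.2)
  choose G hG using hcauchy
  have hdistlim : ∀ (t : unitInterval) (n : ℕ), dist (f n t) (G t) ≤ ε * (1 / 2) ^ n := by
    intro t n
    have h := dist_le_of_le_geometric_of_tendsto (1/2) (ε/2) (by norm_num)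
      (hgeom t t.2.1 t.2.2) (hG t) n
    calc dist (f n ↑t) (G t) ≤ (ε / 2) * (1 / 2) ^ n / (1 - 1 / 2) := h
    _ = ε * (1 / 2) ^ n := by ring
  have hf0 : ∀ n, f n 0 = x := by
    intro n
    have h := (hgood n).2.1
    show (seq n).2 ⌊(0:ℝ) * (seq n).1⌋₊ = x
    simpa using h
  have hf1 : ∀ n, f n 1 = y := by
    intro n
    have h := (hgood n).2.2.1
    show (seq n).2 ⌊(1:ℝ) * (seq n).1⌋₊ = y
    rw [one_mul, Nat.floor_natCast]
    exact h
  have hG0 : G 0 = x := by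
    refine tendsto_nhds_unique (hG 0) ?_
    have : (fun n => f n ((0 : unitInterval) : ℝ)) = fun _ => x := by
      funext n
      rw [show ((0 : unitInterval) : ℝ) = 0 from rfl, hf0]
    rw [this]
    exact tendsto_const_nhds
  have hG1 : G 1 = y := by
    refine tendsto_nhds_unique (hG 1) ?_
    have : (fun n => f n ((1 : unitInterval) : ℝ)) = fun _ => y := by
      funext n
      rw [show ((1 : unitInterval) : ℝ) = 1 from rfl, hf1]
    rw [this]
    exact tendsto_const_nhds
  have hcont : Continuous G := by
    rw [Metric.continuous_iff]
    intro t ε' hε'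
    obtain ⟨n, hn⟩ : ∃ n : ℕ, 3 * (ε * (1 / 2) ^ n) < ε' := by
      obtain ⟨n, hn⟩ := exists_pow_lt_of_lt_one (x := ε' / (3 * ε)) (by positivity)
        (by norm_num : (1:ℝ)/2 < 1)
      refine ⟨n, ?_⟩
      have h2 : (1/2:ℝ)^n * (3*ε) < ε' := (lt_div_iff₀ (by positivity)).mp hn
      nlinarith
    set N := (seq n).1 with hNdef
    refine ⟨1 / ((N : ℝ) + 1), by positivity, fun s hs => ?_⟩
    have hdist : dist s t = |(s : ℝ) - (t : ℝ)| := rfl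
    have hN1 : |(s : ℝ) - (t : ℝ)| * N ≤ 1 := by
      rw [hdist] at hs
      have hNp : (0:ℝ) ≤ N := Nat.cast_nonneg N
      have : |(s:ℝ) - t| < 1 / (N + 1) := hs
      have h0 : (0:ℝ) < N := by exact_mod_cast (hgood n).1
      have h2 : |(s:ℝ) - t| * N < (1 / (N + 1)) * N := mul_lt_mul_of_pos_right this h0
      have h3 : (1 / ((N:ℝ) + 1)) * N ≤ 1 := by
        rw [div_mul_eq_mul_div, div_le_one (by positivity)]
        linarith
      linarith
    have e1 := hdistlim s n
    have e2 := hsame n s t s.2.1 s.2.2 t.2.1 t.2.2 hN1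
    have e3 := hdistlim t n
    have key : dist (G s) (G t) ≤ ε * (1/2)^n + ε / 2^(n+1) + ε * (1/2)^n := by
      calc dist (G s) (G t) ≤ dist (G s) (f n s) + dist (f n s) (f n t) + dist (f n t) (G t) :=
        dist_triangle4 _ _ _ _
      _ ≤ ε * (1/2)^n + ε / 2^(n+1) + ε * (1/2)^n := by
        rw [dist_comm (G s)]
        exact add_le_add (add_le_add e1 e2) e3
    have hhalf : ε / 2^(n+1) ≤ ε * (1/2)^n := by
      have h1 : ε / 2 ^ (n+1) = (ε/2) * (1/2)^n := by
        rw [div_pow, one_pow, pow_succ]; ring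
      have h2 : (0:ℝ) < (1/2:ℝ)^n := by positivity
      rw [h1]; nlinarith
    calc dist (G s) (G t) ≤ ε * (1/2)^n + ε / 2^(n+1) + ε * (1/2)^n := key
    _ ≤ 3 * (ε * (1/2)^n) := by linarith
    _ < ε' := hn
  refine ⟨⟨⟨G, hcont⟩, hG0, hG1⟩, fun t => ?_⟩
  show dist (G t) x ≤ 2 * ε
  have e1 := hdistlim t 0
  have e2 : dist (f 0 ↑t) x ≤ ε / 2 := by
    show dist ((seq 0).2 ⌊(t:ℝ) * ((seq 0).1 : ℕ)⌋₊) x ≤ ε / 2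
    have : (seq 0).2 = fun i => if i = 0 then x else y := rfl
    rw [this]
    by_cases h : ⌊(t:ℝ) * ((1:ℕ) : ℝ)⌋₊ = 0
    · show dist (if ⌊(t:ℝ) * ((1:ℕ):ℝ)⌋₊ = 0 then x else y) x ≤ ε / 2
      rw [if_pos h]
      simpa using (by positivity : (0:ℝ) ≤ ε / 2)
    · show dist (if ⌊(t:ℝ) * ((1:ℕ):ℝ)⌋₊ = 0 then x else y) x ≤ ε / 2
      rw [if_neg h]
      rw [dist_comm]
      exact hxy.le.trans ((hDle 0).trans (by norm_num))
  calc dist (G t) x ≤ dist (G t) (f 0 ↑t) + dist (f 0 ↑t) x := dist_triangle _ _ _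
  _ ≤ ε * (1/2)^0 + ε / 2 := by
    rw [dist_comm (G t)]
    exact add_le_add e1 e2
  _ ≤ 2 * ε := by norm_num; linarith

end AuxPeano

open Metric Set Filter

/-- An open subset of a local dendrite is path-connected iff it is connected. -/
theorem isPathConnected_iff_isConnected_of_isOpen
    {X : Type u} [TopologicalSpace X] (hX : IsLocalDendrite X)
    (U : Set X) (hU : IsOpen U) :
    IsPathConnected U ↔ IsConnected U := by
  obtain ⟨⟨hne, hcomp, hconn, hmetr⟩, hloc⟩ := hX
  constructor
  · exact fun h => h.isConnected
  · intro hcon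
    haveI := hmetr
    letI : MetricSpace X := TopologicalSpace.metrizableSpaceMetric X
    haveI : LocallyPathConnectedSpace X := by
      rw [locallyPathConnectedSpace_iff_pathComponentIn_mem_nhds]
      intro x u hu hxu
      obtain ⟨N, hNnhds, hNdend⟩ := hloc x
      haveI hYcomp : CompactSpace ↥N := hNdend.1.2.1
      haveI hYlc : LocallyConnectedSpace ↥N := hNdend.2.1
      have hxN : x ∈ N := mem_of_mem_nhds hNnhds
      obtain ⟨r, hr, hball⟩ := Metric.mem_nhds_iff.mp
        (Filter.inter_mem (hu.mem_nhds hxu) (interior_mem_nhds.mpr hNnhds))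
      obtain ⟨δ, hδ, hpath⟩ := aux_exists_small_path (Y := ↥N) (show 0 < r / 5 by linarith)
      have hsub : ball x (min δ r) ⊆ pathComponentIn u x := by
        intro z hz
        rw [mem_ball] at hz
        have hzN : z ∈ N := by
          have : z ∈ ball x r := by
            rw [mem_ball]
            exact lt_of_lt_of_le hz (min_le_right _ _)
          exact interior_subset (hball this).2
        have hdistY : dist (⟨z, hzN⟩ : ↥N) (⟨x, hxN⟩ : ↥N) < δ := by
          rw [Subtype.dist_eq]
          exact lt_of_lt_of_le (by rwa [dist_comm] at hz) (min_le_left _ _)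
        obtain ⟨γ, hγ⟩ := hpath _ _ (by rw [dist_comm] at hdistY; exact hdistY)
        have hj : JoinedIn u x z := by
          refine ⟨(γ.map continuous_subtype_val), fun t => ?_⟩
          have h1 : dist (γ t) (⟨x, hxN⟩ : ↥N) ≤ 2 * (r / 5) := hγ t
          have h2 : dist ((γ t : ↥N) : X) x ≤ 2 * (r / 5) := by
            rwa [Subtype.dist_eq] at h1
          have h3 : ((γ t : ↥N) : X) ∈ ball x r := by
            rw [mem_ball]
            calc dist ((γ t : ↥N) : X) x ≤ 2 * (r / 5) := h2
            _ < r := by linarith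
          exact (hball h3).1
        exact hj
      exact Filter.mem_of_superset (ball_mem_nhds x (lt_min hδ hr)) hsub
    exact (hU.isConnected_iff_isPathConnected).mp hcon
end

section
/- Let X be a local dendrite, let G be a subcontinuum of X containing every simple closed curve of X, and let r : X → G be the canonical retraction, i.e., the map restricting to the identity on G and sending each connected component C of X ∖ G to the unique point of (closure of C) ∩ G. Then for every g ∈ G, the fiber r⁻¹(g) is a dendrite. -/
open Topology

/-- The canonical retraction of `X` onto `G`: the identity on `G`, sending each connected
component `C` of `X ∖ G` to the unique point of `closure C ∩ G`. -/
def IsCanonicalRetraction {X : Type*} [TopologicalSpace X] (G : Set X) (r : X → X) :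
    Prop :=
  (∀ g ∈ G, r g = g) ∧
  ∀ x : X, x ∉ G → r x ∈ G ∧ closure (connectedComponentIn Gᶜ x) ∩ G = {r x}

section Auxiliary

open Set Metric Filter

variable {Y : Type*} [TopologicalSpace Y]

/-- A preconnected set meeting a set and its complement meets the frontier. -/
lemma preconn_frontier {K C : Set Y} (hK : IsPreconnected K)
    (h1 : (K ∩ C).Nonempty) (h2 : (K \ C).Nonempty) : (K ∩ frontier C).Nonempty := by
  by_contra hfr
  rw [Set.not_nonempty_iff_eq_empty] at hfr
  have hsub : K ⊆ interior C ∪ (closure C)ᶜ := by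
    intro y hy
    have hyfr : y ∉ frontier C := fun h => by
      have : y ∈ K ∩ frontier C := ⟨hy, h⟩
      simp [hfr] at this
    rcases Classical.em (y ∈ closure C) with hc | hc
    · left
      by_contra hint
      exact hyfr ⟨hc, hint⟩
    · right; exact hc
  obtain ⟨a, haK, haC⟩ := h1
  obtain ⟨b, hbK, hbC⟩ := h2
  have ha : a ∈ interior C := by
    rcases hsub haK with h | h
    · exact h
    · exact absurd (subset_closure haC) h
  have hb : b ∈ (closure C)ᶜ := by
    rcases hsub hbK with h | h
    · exact absurd (interior_subset h) hbC
    · exact h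
  obtain ⟨y, hy⟩ := hK (interior C) (closure C)ᶜ isOpen_interior (isClosed_closure.isOpen_compl)
    hsub ⟨a, haK, ha⟩ ⟨b, hbK, hb⟩
  exact hy.2.2 (subset_closure (interior_subset hy.2.1))

/-- The frontier of a connected component of an open set lies outside the open set. -/
lemma frontier_ccIn_subset [LocallyConnectedSpace Y] {U : Set Y}
    (hU : IsOpen U) (x : Y) : frontier (connectedComponentIn U x) ⊆ Uᶜ := by
  intro w hw
  by_contra hwU
  rw [Set.notMem_compl_iff] at hwU
  have hC : IsOpen (connectedComponentIn U x) := hU.connectedComponentIn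
  rw [hC.frontier_eq] at hw
  have hxU : x ∈ U := by
    by_contra hx
    rw [connectedComponentIn_eq_empty hx] at hw
    simp at hw
  have hsub : insert w (connectedComponentIn U x) ⊆ connectedComponentIn U x := by
    apply IsPreconnected.subset_connectedComponentIn
    · exact isPreconnected_connectedComponentIn.subset_closure (subset_insert _ _)
        (insert_subset hw.1 subset_closure)
    · exact mem_insert_of_mem _ (mem_connectedComponentIn hxU)
    · exact insert_subset hwU (connectedComponentIn_subset U x)
  exact hw.2 (hsub (mem_insert w _))

/-- Uniform local connectedness of a compact, locally connected metric space. -/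
lemma uniform_loc_conn {Y : Type*} [MetricSpace Y] [CompactSpace Y] [LocallyConnectedSpace Y]
    {ε : ℝ} (hε : 0 < ε) :
    ∃ δ > 0, ∀ x y : Y, dist x y < δ →
      ∃ K : Set Y, IsPreconnected K ∧ x ∈ K ∧ y ∈ K ∧ K ⊆ ball x ε := by
  have hV : ∀ x : Y, ∃ V : Set Y, V ⊆ ball x (ε / 2) ∧ IsOpen V ∧ x ∈ V ∧ IsConnected V :=
    fun x => locallyConnectedSpace_iff_subsets_isOpen_isConnected.mp inferInstance x
      (ball x (ε / 2)) (ball_mem_nhds x (half_pos hε))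
  choose V hVsub hVopen hVmem hVconn using hV
  obtain ⟨δ, hδ, hle⟩ := lebesgue_number_lemma_of_metric isCompact_univ hVopen
    (fun x _ => Set.mem_iUnion.mpr ⟨x, hVmem x⟩)
  refine ⟨δ, hδ, fun x y hxy => ?_⟩
  obtain ⟨i, hi⟩ := hle x trivial
  have hxV : x ∈ V i := hi (mem_ball_self hδ)
  have hyV : y ∈ V i := hi (by rwa [mem_ball, dist_comm])
  refine ⟨V i, (hVconn i).isPreconnected, hxV, hyV, fun z hz => ?_⟩
  have h1 : dist x i < ε / 2 := hVsub i hxV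
  have h2 : dist z i < ε / 2 := hVsub i hz
  rw [mem_ball, dist_comm]
  calc dist x z ≤ dist x i + dist i z := dist_triangle x i z
    _ < ε / 2 + ε / 2 := by rw [dist_comm i z]; exact add_lt_add h1 h2
    _ = ε := add_halves ε

/-- A space in which every point has a locally connected neighborhood is
locally connected. -/
lemma locallyConnected_of_nbhds
    (h : ∀ x : Y, ∃ N : Set Y, N ∈ 𝓝 x ∧ LocallyConnectedSpace N) :
    LocallyConnectedSpace Y := by
  rw [locallyConnectedSpace_iff_connected_subsets]
  intro x U hU
  obtain ⟨N, hN, hLC⟩ := h x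
  have hxN : x ∈ N := mem_of_mem_nhds hN
  have hU' : (Subtype.val ⁻¹' U : Set N) ∈ 𝓝 (⟨x, hxN⟩ : N) := by
    rw [preimage_coe_mem_nhds_subtype]
    exact nhdsWithin_le_nhds hU
  obtain ⟨W, hW, hWpc, hWU⟩ :=
    locallyConnectedSpace_iff_connected_subsets.mp hLC ⟨x, hxN⟩ _ hU'
  refine ⟨Subtype.val '' W, ?_, (IsInducing.subtypeVal.isPreconnected_image).mpr hWpc, ?_⟩
  · have h1 : Subtype.val '' W ∈ Filter.map (Subtype.val : N → Y) (𝓝 (⟨x, hxN⟩ : N)) :=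
      Filter.image_mem_map hW
    rw [map_nhds_subtype_val, nhdsWithin_eq_nhds.mpr hN] at h1
    exact h1
  · rintro _ ⟨w, hw, rfl⟩
    exact hWU hw

end Auxiliary

open Set Metric Filter

/-- If `G` is a subcontinuum of a local dendrite `X` containing every simple
closed curve and `r` is the canonical retraction onto `G`, then every fiber of `r` is a
dendrite. -/
theorem fiber_of_canonical_retraction_isDendrite
    {X : Type u} [TopologicalSpace X] (hX : IsLocalDendrite X)
    (G : Set X) (hG : IsContinuum G)
    (hscc : ∀ S : Set X, IsSimpleClosedCurve S → S ⊆ G)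
    (r : X → X) (hr : IsCanonicalRetraction G r) :
    ∀ g ∈ G, IsDendrite ↥(r ⁻¹' {g}) := by
  obtain ⟨⟨hXne, hXcomp, hXconn, hXmet⟩, hld⟩ := hX
  haveI := hXcomp
  haveI := hXmet
  haveI hXlc : LocallyConnectedSpace X := locallyConnected_of_nbhds (fun x => by
    obtain ⟨N, hN, hD⟩ := hld x
    exact ⟨N, hN, hD.2.1⟩)
  letI : MetricSpace X := TopologicalSpace.metrizableSpaceMetric X
  obtain ⟨hGne, hGcomp, hGconn, hGmet⟩ := hG
  have hGc : IsCompact G := isCompact_iff_compactSpace.mpr hGcomp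
  have hGcl : IsClosed G := hGc.isClosed
  have hGco : IsOpen Gᶜ := hGcl.isOpen_compl
  intro g hg
  set F : Set X := r ⁻¹' {g} with hFdef
  have hgF : g ∈ F := by
    simp only [hFdef, Set.mem_preimage, Set.mem_singleton_iff]
    exact hr.1 g hg
  have hFG : ∀ z ∈ F, z ∈ G → z = g := by
    intro z hz hzG
    have h1 : r z = z := hr.1 z hzG
    have h2 : r z = g := hz
    rw [h1] at h2
    exact h2
  -- components of `Gᶜ` meeting `F` are contained in `F` and attach to `G` at `g`
  have hcomp : ∀ x ∈ F, x ∉ G →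
      connectedComponentIn Gᶜ x ⊆ F ∧ closure (connectedComponentIn Gᶜ x) ∩ G = {g} ∧
        g ∈ closure (connectedComponentIn Gᶜ x) := by
    intro x hx hxG
    have h2 := (hr.2 x hxG).2
    have hrx : r x = g := hx
    rw [hrx] at h2
    refine ⟨?_, h2, ?_⟩
    · intro z hz
      have hzG : z ∉ G := (connectedComponentIn_subset _ _) hz
      have hzz := (hr.2 z hzG).2
      rw [← connectedComponentIn_eq hz, h2] at hzz
      have : g = r z := Set.singleton_eq_singleton_iff.mp hzz
      show r z = g
      exact this.symm
    · have hgmem : g ∈ ({g} : Set X) := rfl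
      rw [← h2] at hgmem
      exact hgmem.1
  -- preconnectedness of F
  have hins : ∀ x ∈ F, x ∉ G → IsPreconnected (insert g (connectedComponentIn Gᶜ x)) := by
    intro x hx hxG
    exact isPreconnected_connectedComponentIn.subset_closure (subset_insert _ _)
      (insert_subset (hcomp x hx hxG).2.2 subset_closure)
  have hFeq : F = ⋃₀ {s | s = {g} ∨ ∃ x, x ∈ F ∧ x ∉ G ∧
      s = insert g (connectedComponentIn Gᶜ x)} := by
    ext z
    constructor
    · intro hz
      by_cases hzG : z ∈ G
      · exact ⟨{g}, Or.inl rfl, by simp [hFG z hz hzG]⟩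
      · exact ⟨insert g (connectedComponentIn Gᶜ z), Or.inr ⟨z, hz, hzG, rfl⟩,
          mem_insert_of_mem _ (mem_connectedComponentIn hzG)⟩
    · rintro ⟨s, hs, hzs⟩
      rcases hs with rfl | ⟨x, hx, hxG, rfl⟩
      · rw [Set.mem_singleton_iff] at hzs
        rw [hzs]; exact hgF
      · rcases hzs with rfl | hz
        · exact hgF
        · exact (hcomp x hx hxG).1 hz
  have hFpc : IsPreconnected F := by
    rw [hFeq]
    refine isPreconnected_sUnion g _ ?_ ?_
    · rintro s (rfl | ⟨x, hx, hxG, rfl⟩)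
      · exact rfl
      · exact mem_insert _ _
    · rintro s (rfl | ⟨x, hx, hxG, rfl⟩)
      · exact isPreconnected_singleton
      · exact hins x hx hxG
  -- closedness of F
  have hFcl : IsClosed F := by
    refine isClosed_of_closure_subset fun x hx => ?_
    by_cases hxG : x ∈ G
    · -- show x = g
      by_contra hxF
      have hxg : x ≠ g := fun h => hxF (h ▸ hgF)
      have hε : 0 < dist x g := dist_pos.mpr hxg
      obtain ⟨δ, hδ, hK⟩ := uniform_loc_conn (Y := X) (half_pos hε)
      obtain ⟨y, hyF, hxy⟩ := Metric.mem_closure_iff.mp hx (min δ (dist x g / 2))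
        (lt_min hδ (half_pos hε))
      have hyg : y ≠ g := by
        rintro rfl
        have h1 : dist x y < dist x y / 2 := hxy.trans_le (min_le_right _ _)
        linarith [half_lt_self hε]
      have hyG : y ∉ G := fun h => hyg (hFG y hyF h)
      obtain ⟨K, hKpc, hxK, hyK, hKball⟩ := hK x y (hxy.trans_le (min_le_left _ _))
      have hxC : x ∉ connectedComponentIn Gᶜ y :=
        fun h => (connectedComponentIn_subset Gᶜ y h) hxG
      have hyC : y ∈ connectedComponentIn Gᶜ y := mem_connectedComponentIn hyG
      obtain ⟨w, hwK, hwfr⟩ := preconn_frontier hKpc ⟨y, hyK, hyC⟩ ⟨x, hxK, hxC⟩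
      have hwG : w ∈ G := by
        have := frontier_ccIn_subset hGco y hwfr
        simpa using this
      have hwcl : w ∈ closure (connectedComponentIn Gᶜ y) := frontier_subset_closure hwfr
      have hwg : w = g := by
        have h2 := (hcomp y hyF hyG).2.1
        have : w ∈ ({g} : Set X) := h2 ▸ (⟨hwcl, hwG⟩ : w ∈ _ ∩ G)
        exact this
      have hdw : dist w x < dist x g / 2 := mem_ball.mp (hKball hwK)
      rw [hwg, dist_comm] at hdw
      linarith
    · -- x ∉ G : x is in the (open) component of some nearby point of F
      have hCopen : IsOpen (connectedComponentIn Gᶜ x) := hGco.connectedComponentIn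
      have hxC : x ∈ connectedComponentIn Gᶜ x := mem_connectedComponentIn hxG
      obtain ⟨y, hyC, hyF⟩ := _root_.mem_closure_iff.mp hx _ hCopen hxC
      have hyG : y ∉ G := connectedComponentIn_subset _ _ hyC
      have h2y := (hr.2 y hyG).2
      rw [← connectedComponentIn_eq hyC] at h2y
      have h2x := (hr.2 x hxG).2
      have hxy : ({r y} : Set X) = {r x} := h2y.symm.trans h2x
      have hry : r y = g := hyF
      rw [hry] at hxy
      show r x = g
      exact (Set.singleton_eq_singleton_iff.mp hxy).symm
  -- local connectedness of F
  have hLC : LocallyConnectedSpace ↥F := by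
    rw [locallyConnectedSpace_iff_connected_subsets]
    rintro ⟨x, hxF⟩ U hU
    rw [nhds_subtype] at hU
    obtain ⟨T, hT, hTU⟩ := Filter.mem_comap.mp hU
    by_cases hxG : x ∈ G
    · -- x = g
      have hxg : x = g := hFG x hxF hxG
      subst hxg
      obtain ⟨ε, hε, hball⟩ := Metric.mem_nhds_iff.mp hT
      obtain ⟨δ0, hδ0, hK⟩ := uniform_loc_conn (Y := X) (half_pos hε)
      set δ := min δ0 ε with hδdef
      have hδ : 0 < δ := lt_min hδ0 hε
      have key : ∀ z, z ∈ F → z ∉ G → dist x z < δ →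
          x ∈ closure (connectedComponentIn (Gᶜ ∩ ball x ε) z) ∧
            connectedComponentIn (Gᶜ ∩ ball x ε) z ⊆ F ∩ ball x ε := by
        intro z hzF hzG hdist
        have hzU : z ∈ Gᶜ ∩ ball x ε :=
          ⟨hzG, by rw [mem_ball, dist_comm]; exact hdist.trans_le (min_le_right _ _)⟩
        have hUopen : IsOpen (Gᶜ ∩ ball x ε) := hGco.inter isOpen_ball
        have hDC : connectedComponentIn (Gᶜ ∩ ball x ε) z ⊆ connectedComponentIn Gᶜ z :=
          isPreconnected_connectedComponentIn.subset_connectedComponentIn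
            (mem_connectedComponentIn hzU)
            ((connectedComponentIn_subset _ _).trans Set.inter_subset_left)
        have hDF : connectedComponentIn (Gᶜ ∩ ball x ε) z ⊆ F ∩ ball x ε :=
          Set.subset_inter (hDC.trans (hcomp z hzF hzG).1)
            ((connectedComponentIn_subset _ _).trans Set.inter_subset_right)
        refine ⟨?_, hDF⟩
        obtain ⟨K, hKpc, hxK, hzK, hKb⟩ := hK x z (hdist.trans_le (min_le_left _ _))
        have hxD : x ∉ connectedComponentIn (Gᶜ ∩ ball x ε) z :=
          fun h => ((connectedComponentIn_subset _ _ h).1) hxG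
        obtain ⟨w, hwK, hwfr⟩ := preconn_frontier hKpc
          ⟨z, hzK, mem_connectedComponentIn hzU⟩ ⟨x, hxK, hxD⟩
        have hwc := frontier_ccIn_subset hUopen z hwfr
        have hwball : w ∈ ball x ε :=
          ball_subset_ball (by linarith : ε / 2 ≤ ε) (hKb hwK)
        have hwG : w ∈ G := by
          rw [Set.compl_inter, Set.mem_union] at hwc
          rcases hwc with h | h
          · simpa using h
          · exact absurd hwball h
        have hwclD : w ∈ closure (connectedComponentIn (Gᶜ ∩ ball x ε) z) :=
          frontier_subset_closure hwfr
        have hwg : w = x := by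
          have h2 := (hcomp z hzF hzG).2.1
          have : w ∈ ({x} : Set X) :=
            h2 ▸ (⟨closure_mono hDC hwclD, hwG⟩ : w ∈ _ ∩ G)
          exact this
        rw [hwg] at hwclD
        exact hwclD
      set V : Set X := insert x (⋃ z ∈ {z | z ∈ F ∧ z ∉ G ∧ dist x z < δ},
        connectedComponentIn (Gᶜ ∩ ball x ε) z) with hVdef
      have hVF : V ⊆ F ∩ ball x ε :=
        Set.insert_subset ⟨hxF, mem_ball_self hε⟩
          (Set.iUnion₂_subset fun z hz => (key z hz.1 hz.2.1 hz.2.2).2)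
      have hVpc : IsPreconnected V := by
        have hVeq : V = ⋃₀ ({{x}} ∪ {s | ∃ z, (z ∈ F ∧ z ∉ G ∧ dist x z < δ) ∧
            s = insert x (connectedComponentIn (Gᶜ ∩ ball x ε) z)}) := by
          ext w
          simp only [hVdef, Set.mem_insert_iff, Set.mem_iUnion, Set.mem_setOf_eq,
            Set.sUnion_union, Set.sUnion_singleton, Set.mem_union, Set.mem_singleton_iff,
            Set.mem_sUnion, exists_prop]
          constructor
          · rintro (rfl | ⟨z, hz, hw⟩)
            · exact Or.inl rfl
            · exact Or.inr ⟨_, ⟨z, hz, rfl⟩, Set.mem_insert_of_mem _ hw⟩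
          · rintro (rfl | ⟨s, ⟨z, hz, rfl⟩, hw⟩)
            · exact Or.inl rfl
            · rcases hw with rfl | hw
              · exact Or.inl rfl
              · exact Or.inr ⟨z, hz, hw⟩
        rw [hVeq]
        refine isPreconnected_sUnion x _ ?_ ?_
        · rintro s (rfl | ⟨z, hz, rfl⟩)
          · exact rfl
          · exact mem_insert _ _
        · rintro s (rfl | ⟨z, hz, rfl⟩)
          · exact isPreconnected_singleton
          · exact isPreconnected_connectedComponentIn.subset_closure (subset_insert _ _)
              (insert_subset (key z hz.1 hz.2.1 hz.2.2).1 subset_closure)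
      have hVnb : F ∩ ball x δ ⊆ V := by
        rintro z ⟨hzF, hzb⟩
        by_cases hzG : z ∈ G
        · have := hFG z hzF hzG
          rw [this]
          exact Set.mem_insert _ _
        · refine Set.mem_insert_of_mem _ ?_
          refine Set.mem_biUnion ⟨hzF, hzG, by rwa [mem_ball, dist_comm] at hzb⟩ ?_
          exact mem_connectedComponentIn
            ⟨hzG, ball_subset_ball (min_le_right _ _) hzb⟩
      refine ⟨Subtype.val ⁻¹' V, ?_, ?_, ?_⟩
      · rw [nhds_subtype]
        exact Filter.mem_comap.mpr ⟨ball x δ, ball_mem_nhds x hδ,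
          fun p hp => hVnb ⟨p.2, hp⟩⟩
      · have himg : Subtype.val '' (Subtype.val ⁻¹' V : Set F) = V := by
          rw [Subtype.image_preimage_coe]
          exact Set.inter_eq_self_of_subset_right (hVF.trans Set.inter_subset_left)
        rw [← IsInducing.subtypeVal.isPreconnected_image, himg]
        exact hVpc
      · intro p hp
        exact hTU (hball ((hVF hp).2))
    · -- x in the open component C ⊆ F
      have hCopen : IsOpen (connectedComponentIn Gᶜ x) := hGco.connectedComponentIn
      have hCF : connectedComponentIn Gᶜ x ⊆ F := (hcomp x hxF hxG).1
      obtain ⟨W, hW, hWpc, hWsub⟩ := locallyConnectedSpace_iff_connected_subsets.mp hXlc x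
        (T ∩ connectedComponentIn Gᶜ x)
        (Filter.inter_mem hT (hCopen.mem_nhds (mem_connectedComponentIn hxG)))
      refine ⟨Subtype.val ⁻¹' W, ?_, ?_, fun z hz => hTU (hWsub hz).1⟩
      · rw [nhds_subtype]
        exact Filter.preimage_mem_comap hW
      · have himg : Subtype.val '' (Subtype.val ⁻¹' W : Set F) = W := by
          rw [Subtype.image_preimage_coe]
          refine Set.inter_eq_self_of_subset_right ?_
          intro w hw
          exact hCF (hWsub hw).2
        rw [← IsInducing.subtypeVal.isPreconnected_image, himg]
        exact hWpc
  -- no simple closed curve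
  have hnoscc : ∀ S : Set ↥F, ¬ IsSimpleClosedCurve S := by
    rintro S ⟨e⟩
    haveI : Fact ((0 : ℝ) < 1) := ⟨one_pos⟩
    haveI : CompactSpace S := e.symm.compactSpace
    have h2 : ((1 / 2 : ℝ) : AddCircle (1 : ℝ)) ≠ 0 := by
      rw [Ne, AddCircle.coe_eq_zero_iff]
      rintro ⟨n, hn⟩
      have hn' : (n : ℝ) = 1 / 2 := by simpa using hn
      have h2n : ((2 * n : ℤ) : ℝ) = 1 := by push_cast; linarith
      have : (2 * n : ℤ) = 1 := by exact_mod_cast h2n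
      omega
    have hab : (e.symm ((1 / 2 : ℝ) : AddCircle (1 : ℝ))) ≠ (e.symm 0) := by
      intro h
      exact h2 (e.symm.injective h)
    set ι : ↥S → X := fun p => ((p : ↥F) : X) with hιdef
    have hιcont : Continuous ι := continuous_subtype_val.comp continuous_subtype_val
    have hιinj : Function.Injective ι := fun a b h =>
      Subtype.ext (Subtype.ext h)
    have hcont' : Continuous fun p : ↥S => (⟨ι p, Set.mem_range_self p⟩ : ↥(Set.range ι)) :=
      hιcont.subtype_mk _
    have hhomeq : ↥S ≃ₜ ↥(Set.range ι) :=
      Continuous.homeoOfEquivCompactToT2 (f := Equiv.ofInjective ι hιinj) hcont'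
    have hSCC : IsSimpleClosedCurve (Set.range ι) := ⟨hhomeq.symm.trans e⟩
    have hrange : Set.range ι ⊆ G := hscc _ hSCC
    have ha : ι (e.symm ((1 / 2 : ℝ) : AddCircle (1 : ℝ))) = g :=
      hFG _ (e.symm ((1 / 2 : ℝ) : AddCircle (1 : ℝ)) : ↥S).1.2
        (hrange (Set.mem_range_self _))
    have hb : ι (e.symm 0) = g :=
      hFG _ ((e.symm 0 : ↥S)).1.2 (hrange (Set.mem_range_self _))
    exact hab (hιinj (ha.trans hb.symm))
  exact ⟨⟨⟨⟨g, hgF⟩⟩, isCompact_iff_compactSpace.mp hFcl.isCompact,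
    Subtype.connectedSpace ⟨⟨g, hgF⟩, hFpc⟩, inferInstance⟩, hLC, hnoscc⟩
end

section
/- Let X be a local dendrite, let G be a subcontinuum of X containing every simple closed curve of X, and let r : X → G be the canonical retraction, i.e., the map restricting to the identity on G and sending each connected component C of X ∖ G to the unique point of (closure of C) ∩ G. Then the set {g ∈ G : r⁻¹(g) ≠ {g}} is countable. -/
open Topology

/-- If `G` is a subcontinuum of a local dendrite `X` containing every simple
closed curve and `r` is the canonical retraction onto `G`, then the set of points of `G`
with nontrivial fiber is countable. -/
theorem countable_sprouting_points
    {X : Type u} [TopologicalSpace X] (hX : IsLocalDendrite X)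
    (G : Set X) (hG : IsContinuum G)
    (hscc : ∀ S : Set X, IsSimpleClosedCurve S → S ⊆ G)
    (r : X → X) (hr : IsCanonicalRetraction G r) :
    Set.Countable {g : X | g ∈ G ∧ r ⁻¹' {g} ≠ {g}} := by
  classical
  obtain ⟨⟨hXne, hXcomp, hXconn, hXmet⟩, hdend⟩ := hX
  haveI := hXcomp
  haveI := hXmet
  letI : MetricSpace X := TopologicalSpace.metrizableSpaceMetric X
  -- X is locally connected
  haveI : LocallyConnectedSpace X := by
    rw [locallyConnectedSpace_iff_connected_subsets]
    intro x U hU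
    obtain ⟨N, hN, _, hLC, _⟩ := hdend x
    haveI := hLC
    set x' : N := ⟨x, mem_of_mem_nhds hN⟩ with hx'
    have hU' : (Subtype.val ⁻¹' U : Set N) ∈ 𝓝 x' :=
      continuous_subtype_val.continuousAt.preimage_mem_nhds hU
    obtain ⟨V, hV, hVconn, hVU⟩ :=
      (locallyConnectedSpace_iff_connected_subsets.mp hLC) x' _ hU'
    refine ⟨Subtype.val '' V, ?_, hVconn.image _ continuous_subtype_val.continuousOn, ?_⟩
    · obtain ⟨u, hu, huV⟩ := (mem_nhds_subtype N x' V).mp hV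
      refine Filter.mem_of_superset (Filter.inter_mem hu hN) ?_
      intro y hy
      exact ⟨⟨y, hy.2⟩, huV hy.1, rfl⟩
    · rintro _ ⟨v, hv, rfl⟩
      exact hVU hv
  -- G is compact, so Gᶜ is open
  have hGcompact : IsCompact G := isCompact_iff_compactSpace.mpr hG.2.1
  have hGopen : IsOpen Gᶜ := hGcompact.isClosed.isOpen_compl
  -- each sprouting point has a point outside G mapped to it
  have key : ∀ g ∈ {g : X | g ∈ G ∧ r ⁻¹' {g} ≠ {g}}, ∃ x, x ∉ G ∧ r x = g := by
    rintro g ⟨hgG, hfib⟩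
    by_contra h
    push_neg at h
    apply hfib
    ext y
    simp only [Set.mem_preimage, Set.mem_singleton_iff]
    constructor
    · intro hy
      by_cases hyG : y ∈ G
      · rw [hr.1 y hyG] at hy; exact hy
      · exact absurd hy (h y hyG)
    · intro hy; rw [hy]; exact hr.1 g hgG
  choose! f hf hrf using key
  -- map each sprouting point to the connected component of its preimage point
  refine Set.PairwiseDisjoint.countable_of_isOpen
    (s := fun g => connectedComponentIn Gᶜ (f g)) ?_ ?_ ?_
  · intro g hg h hh hne
    refine Set.disjoint_left.mpr fun y hyg hyh => hne ?_
    have hyg' : y ∈ connectedComponentIn Gᶜ (f g) := hyg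
    have hyh' : y ∈ connectedComponentIn Gᶜ (f h) := hyh
    have hcc : connectedComponentIn Gᶜ (f g) = connectedComponentIn Gᶜ (f h) := by
      exact (connectedComponentIn_eq hyg').trans (connectedComponentIn_eq hyh').symm
    have h1 := (hr.2 (f g) (hf g hg)).2
    have h2 := (hr.2 (f h) (hf h hh)).2
    rw [hcc, h2] at h1
    have : r (f h) = r (f g) := Set.singleton_eq_singleton_iff.mp h1
    rw [← hrf g hg, ← hrf h hh, this]
  · exact fun g hg => hGopen.connectedComponentIn
  · exact fun g hg => ⟨f g, mem_connectedComponentIn (hf g hg)⟩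
end
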